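/- arXiv:1501.02079 — 3 statements merged into one kernel-verified Lean document; each statement's English description precedes it below -/
import Mathlib

section
/- Let X be a quaternionic normed right linear space and Y a subspace. Every bounded right-linear functional λ : Y → ℍ extends to a bounded right-linear functional Λ : X → ℍ with Λ|_Y = λ and ‖Λ‖ = ‖λ‖. -/
noncomputable section

open Quaternion MulOpposite

/-!
Apply the real Hahn–Banach theorem to `Re ∘ λ`, whose norm is at most `‖λ‖`, to get a real
functional `g` on `X`. A right-linear functional is determined by its real part: `Λ x` must be the
quaternion `u` with `Re (u p) = g (x p)` for all `p`, i.e. the Riesz representative of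
`q ↦ g (x q̄)` for the inner product `Re (a b̄)` on `ℍ ≅ ℝ⁴`; explicitly
`Λ x = g x - g (x i) i - g (x j) j - g (x k) k`. Additivity, right-linearity and `Λ|_Y = λ` hold
because `Re (u p) = Re (v p)` for all `p` forces `u = v` (take `p = conj (u - v)`), and the Riesz
map is an isometry, so `‖Λ x‖ ≤ ‖g‖ ‖x‖ = ‖Re ∘ λ‖ ‖x‖`.
-/

theorem Quaternion.eq_of_forall_re_mul_eq {u v : ℍ[ℝ]}
    (h : ∀ p : ℍ[ℝ], (u * p).re = (v * p).re) : u = v := by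
  rw [← sub_eq_zero, ← normSq_eq_zero, ← re_coe (normSq (u - v)), ← self_mul_star, sub_mul,
    re_sub, h, sub_self]

theorem Quaternion.abs_re_le_norm (q : ℍ[ℝ]) : |q.re| ≤ ‖q‖ := by
  simpa [inner_def] using abs_real_inner_le_norm q 1

section RightLinear

variable {M : Type*} [AddCommGroup M] [Module ℝ M] [Module ℍ[ℝ]ᵐᵒᵖ M] [IsScalarTower ℝ ℍ[ℝ]ᵐᵒᵖ M]

def reLinearOfRightLinear (lam : M → ℍ[ℝ]) (hadd : ∀ y z, lam (y + z) = lam y + lam z)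
    (hlin : ∀ y (q : ℍ[ℝ]), lam (op q • y) = lam y * q) : M →ₗ[ℝ] ℝ where
  toFun y := (lam y).re
  map_add' y z := by rw [hadd, re_add]
  map_smul' r y := by
    rw [← algebraMap_smul ℍ[ℝ]ᵐᵒᵖ r y, MulOpposite.algebraMap_apply, hlin]
    simp [mul_comm]

namespace LinearMap

def extendQuaternion (g : M →ₗ[ℝ] ℝ) (x : M) : ℍ[ℝ] :=
  (InnerProductSpace.toDual ℝ ℍ[ℝ]).symm
    (g ∘ₗ starAe.toLinearMap.smulRight x).toContinuousLinearMap

variable (g : M →ₗ[ℝ] ℝ)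

theorem re_extendQuaternion_mul (x : M) (p : ℍ[ℝ]) :
    (g.extendQuaternion x * p).re = g (op p • x) := by
  conv_lhs => rw [← star_star p, ← inner_def]
  rw [extendQuaternion, InnerProductSpace.toDual_symm_apply]
  simp

theorem extendQuaternion_eq_of_forall_re {x : M} {u : ℍ[ℝ]}
    (h : ∀ p : ℍ[ℝ], (u * p).re = g (op p • x)) : g.extendQuaternion x = u :=
  eq_of_forall_re_mul_eq fun p => by rw [re_extendQuaternion_mul, h]

theorem extendQuaternion_add (x z : M) :
    g.extendQuaternion (x + z) = g.extendQuaternion x + g.extendQuaternion z :=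
  g.extendQuaternion_eq_of_forall_re fun p => by
    rw [add_mul, re_add, re_extendQuaternion_mul, re_extendQuaternion_mul, smul_add, map_add]

theorem extendQuaternion_op_smul (x : M) (q : ℍ[ℝ]) :
    g.extendQuaternion (op q • x) = g.extendQuaternion x * q :=
  g.extendQuaternion_eq_of_forall_re fun p => by
    rw [mul_assoc, re_extendQuaternion_mul, smul_smul, ← op_mul]

end LinearMap
end RightLinear

theorem ContinuousLinearMap.norm_extendQuaternion_le {X : Type*} [NormedAddCommGroup X]
    [NormedSpace ℝ X] [Module ℍ[ℝ]ᵐᵒᵖ X] [IsScalarTower ℝ ℍ[ℝ]ᵐᵒᵖ X]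
    (hX : ∀ (x : X) (q : ℍ[ℝ]), ‖op q • x‖ = ‖x‖ * ‖q‖) (g : X →L[ℝ] ℝ) (x : X) :
    ‖(g : X →ₗ[ℝ] ℝ).extendQuaternion x‖ ≤ ‖g‖ * ‖x‖ := by
  rw [LinearMap.extendQuaternion, LinearIsometryEquiv.norm_map]
  refine ContinuousLinearMap.opNorm_le_bound _ (by positivity) fun q => ?_
  calc ‖g (op (star q) • x)‖ ≤ ‖g‖ * ‖op (star q) • x‖ := g.le_opNorm _
    _ = ‖g‖ * ‖x‖ * ‖q‖ := by rw [hX, norm_star, mul_assoc]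

abbrev NormedSpace.realOfQuaternionic {X : Type*} [NormedAddCommGroup X] [Module ℍ[ℝ]ᵐᵒᵖ X]
    (hX : ∀ (x : X) (q : ℍ[ℝ]), ‖op q • x‖ = ‖x‖ * ‖q‖) : NormedSpace ℝ X where
  toModule := Module.compHom X (algebraMap ℝ ℍ[ℝ]ᵐᵒᵖ)
  norm_smul_le r x := (hX x r).trans_le (by rw [norm_coe, mul_comm])

/-- Quaternionic Hahn–Banach theorem: let `X` be a quaternionic normed right linear space
(a right `ℍ`-module, encoded as a module over `ℍᵐᵒᵖ`, with `‖x • q‖ = ‖x‖ * |q|`) and `Y`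
a subspace. Every bounded right-linear functional `λ : Y → ℍ` extends to a right-linear
functional `Λ : X → ℍ` with `Λ|_Y = λ` and `‖Λ‖ = ‖λ‖` (every bound for `λ` is a bound for
`Λ`; together with the extension property this gives equality of norms). -/
theorem quaternionic_hahn_banach
    (X : Type*) [NormedAddCommGroup X] [Module (Quaternion ℝ)ᵐᵒᵖ X]
    (hX : ∀ (x : X) (q : Quaternion ℝ), ‖(op q) • x‖ = ‖x‖ * ‖q‖)
    (Y : Submodule (Quaternion ℝ)ᵐᵒᵖ X)
    (lam : Y → Quaternion ℝ)
    (hadd : ∀ y z : Y, lam (y + z) = lam y + lam z)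
    (hlin : ∀ (y : Y) (q : Quaternion ℝ), lam ((op q) • y) = lam y * q)
    (hbdd : ∃ C : ℝ, ∀ y : Y, ‖lam y‖ ≤ C * ‖(y : X)‖) :
    ∃ Lam : X → Quaternion ℝ,
      (∀ x z : X, Lam (x + z) = Lam x + Lam z)
      ∧ (∀ (x : X) (q : Quaternion ℝ), Lam ((op q) • x) = Lam x * q)
      ∧ (∀ y : Y, Lam (y : X) = lam y)
      ∧ (∀ C : ℝ, 0 ≤ C → (∀ y : Y, ‖lam y‖ ≤ C * ‖(y : X)‖) →
          ∀ x : X, ‖Lam x‖ ≤ C * ‖x‖) := by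
  let := NormedSpace.realOfQuaternionic hX
  have : IsScalarTower ℝ ℍ[ℝ]ᵐᵒᵖ X := .of_algebraMap_smul fun _ _ => rfl
  let f₀ : Y.restrictScalars ℝ →ₗ[ℝ] ℝ := reLinearOfRightLinear lam hadd hlin
  have hf₀ : ∀ C, (∀ y : Y, ‖lam y‖ ≤ C * ‖(y : X)‖) → ∀ y, ‖f₀ y‖ ≤ C * ‖y‖ :=
    fun C hC y => (abs_re_le_norm _).trans (hC y)
  obtain ⟨C₀, hC₀⟩ := hbdd
  obtain ⟨g, hg, hgf⟩ := exists_extension_norm_eq _ (f₀.mkContinuous C₀ (hf₀ C₀ hC₀))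
  refine ⟨(g : X →ₗ[ℝ] ℝ).extendQuaternion, LinearMap.extendQuaternion_add _,
    LinearMap.extendQuaternion_op_smul _, fun y => ?_, fun C hC hlamC x => ?_⟩
  · refine LinearMap.extendQuaternion_eq_of_forall_re _ fun p => ?_
    rw [← hlin]
    exact (hg ⟨_, (op p • y).2⟩).symm
  · refine (g.norm_extendQuaternion_le hX x).trans
      (mul_le_mul_of_nonneg_right ?_ (norm_nonneg x))
    exact hgf ▸ ContinuousLinearMap.opNorm_le_bound _ hC (hf₀ C hlamC)
end
end

section
/- Let f ∈ L¹ₛ(∂𝔹) be a slice function. Then f ∈ BMO(∂𝔹) (i.e. sup over imaginary units I of the BMO norm of the restriction to ∂𝔹_I is finite) if and only if f ∈ BMO(∂𝔹_I) for every single imaginary unit I; indeed finiteness on one slice implies finiteness on every slice with comparable norm. -/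
noncomputable section

open MeasureTheory Quaternion

instance : MeasurableSpace (Quaternion ℝ) := borel _
instance : BorelSpace (Quaternion ℝ) := ⟨rfl⟩

/-- The sphere `𝕊` of imaginary units of `ℍ`. -/
def IU : Type := {I : Quaternion ℝ // I ^ 2 = -1}

instance : MeasurableSpace IU := Subtype.instMeasurableSpace

/-- The point `e^{tI} = cos t + (sin t) I`. -/
def eI (I : Quaternion ℝ) (t : ℝ) : Quaternion ℝ :=
  ((Real.cos t : ℝ) : Quaternion ℝ) + Real.sin t • I

/-- The normalized measure `dΣ(e^{tI}) = dσ(I) dt` on `∂𝔹`, obtained by pushing forward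
`σ ⊗ (dt on (0, 2π])` under `(I, t) ↦ e^{tI}` and normalizing by `2π`. -/
def sphereMeasure (σ : Measure IU) : Measure (Quaternion ℝ) :=
  (ENNReal.ofReal (2 * Real.pi))⁻¹ •
    Measure.map (fun p : IU × ℝ => eI p.1.1 p.2)
      (σ.prod (volume.restrict (Set.Ioc 0 (2 * Real.pi))))

/-- A slice function on `∂𝔹`: it satisfies the representation formula. -/
def IsSlice (f : Quaternion ℝ → Quaternion ℝ) : Prop :=
  ∀ x y : ℝ, ∀ I J : Quaternion ℝ, I ^ 2 = -1 → J ^ 2 = -1 → x ^ 2 + y ^ 2 = 1 →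
    f ((x : Quaternion ℝ) + y • J) =
      ((1 - J * I) / 2) * f ((x : Quaternion ℝ) + y • I) +
      ((1 + J * I) / 2) * f ((x : Quaternion ℝ) - y • I)

/-- The `n`-th Fourier coefficient of (the restriction to the slice of `I` of) a function
on `∂𝔹`: `φ̂(n) = (1/2π) ∫₀^{2π} e^{-nIt} φ(e^{It}) dt`. -/
def fourierCoef (φ : Quaternion ℝ → Quaternion ℝ) (I : Quaternion ℝ) (n : ℤ) : Quaternion ℝ :=
  (2 * Real.pi)⁻¹ • ∫ t in (0:ℝ)..(2 * Real.pi), eI I (-(n * t)) * φ (eI I t)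


/-- The set of mean oscillations of (the restriction to the circle `∂𝔹_I` of) `f` over arcs
`a = (α, β)` with `|a| ≤ 2π`.  `f ∈ BMO(∂𝔹_I)` means this set is bounded above, and
`‖f‖_{BMO(∂𝔹_I)}` is its supremum. -/
def meanOscSet (f : Quaternion ℝ → Quaternion ℝ) (I : Quaternion ℝ) : Set ℝ :=
  {m : ℝ | ∃ α β : ℝ, α < β ∧ β - α ≤ 2 * Real.pi ∧
    m = (β - α)⁻¹ * ∫ t in α..β,
      ‖f (eI I t) - (β - α)⁻¹ • ∫ s in α..β, f (eI I s)‖}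

/-!
On the circle `∂𝔹_J` the representation formula reads
`f(e^{tJ}) = a f(e^{tI}) + b f(e^{-tI})` with `a = (1 - JI)/2`, `b = (1 + JI)/2`, both of norm
at most `1`. Mean oscillation over an arc is subadditive and does not grow under left
multiplication by such constants, and `t ↦ -t` maps the arc `(α, β)` to the arc `(-β, -α)`.
Hence every mean oscillation of `f` on `∂𝔹_J` is at most the sum of two mean oscillations of
`f` on `∂𝔹_I`, so `‖f‖_{BMO(∂𝔹_J)} ≤ 2 ‖f‖_{BMO(∂𝔹_I)}` for all imaginary units `I`, `J`.
-/

section MeanOscillation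

variable {E F : Type*} [NormedAddCommGroup E] [NormedSpace ℝ E]
  [NormedAddCommGroup F] [NormedSpace ℝ F]

def meanOsc (g : ℝ → E) (α β : ℝ) : ℝ :=
  (β - α)⁻¹ * ∫ t in α..β, ‖g t - (β - α)⁻¹ • ∫ s in α..β, g s‖

theorem meanOsc_nonneg (g : ℝ → E) {α β : ℝ} (hab : α ≤ β) : 0 ≤ meanOsc g α β :=
  mul_nonneg (inv_nonneg.2 (sub_nonneg.2 hab))
    (intervalIntegral.integral_nonneg hab fun _ _ => norm_nonneg _)

theorem meanOsc_add_le {g h : ℝ → E} {α β : ℝ} (hab : α ≤ β)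
    (hg : IntervalIntegrable g volume α β) (hh : IntervalIntegrable h volume α β) :
    meanOsc (fun t => g t + h t) α β ≤ meanOsc g α β + meanOsc h α β := by
  set c := (β - α)⁻¹
  have hc : 0 ≤ c := inv_nonneg.2 (sub_nonneg.2 hab)
  have hosc_g : IntervalIntegrable (fun t => ‖g t - c • ∫ s in α..β, g s‖) volume α β :=
    (hg.sub intervalIntegrable_const).norm
  have hosc_h : IntervalIntegrable (fun t => ‖h t - c • ∫ s in α..β, h s‖) volume α β :=
    (hh.sub intervalIntegrable_const).norm
  have hosc_add : IntervalIntegrable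
      (fun t => ‖g t + h t - c • ∫ s in α..β, g s + h s‖) volume α β :=
    ((hg.add hh).sub intervalIntegrable_const).norm
  have hpoint : ∀ t, ‖g t + h t - c • ∫ s in α..β, g s + h s‖ ≤
      ‖g t - c • ∫ s in α..β, g s‖ + ‖h t - c • ∫ s in α..β, h s‖ := fun t => by
    rw [intervalIntegral.integral_add hg hh, smul_add, add_sub_add_comm]
    exact norm_add_le _ _
  calc meanOsc (fun t => g t + h t) α β
      ≤ c * ∫ t in α..β, (‖g t - c • ∫ s in α..β, g s‖ + ‖h t - c • ∫ s in α..β, h s‖) :=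
        mul_le_mul_of_nonneg_left (intervalIntegral.integral_mono_on hab hosc_add
          (hosc_g.add hosc_h) fun t _ => hpoint t) hc
    _ = meanOsc g α β + meanOsc h α β := by
        rw [intervalIntegral.integral_add hosc_g hosc_h, mul_add]; rfl

theorem meanOsc_comp_le [CompleteSpace E] [CompleteSpace F] (L : E →L[ℝ] F) {g : ℝ → E}
    {α β : ℝ} (hab : α ≤ β) (hg : IntervalIntegrable g volume α β) :
    meanOsc (fun t => L (g t)) α β ≤ ‖L‖ * meanOsc g α β := by
  set c := (β - α)⁻¹
  have hc : 0 ≤ c := inv_nonneg.2 (sub_nonneg.2 hab)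
  have hosc : IntervalIntegrable (fun t => ‖g t - c • ∫ s in α..β, g s‖) volume α β :=
    (hg.sub intervalIntegrable_const).norm
  have hosc_L : IntervalIntegrable
      (fun t => ‖L (g t) - c • ∫ s in α..β, L (g s)‖) volume α β :=
    (IntervalIntegrable.sub ⟨L.integrable_comp hg.1, L.integrable_comp hg.2⟩ intervalIntegrable_const).norm
  have hpoint : ∀ t, ‖L (g t) - c • ∫ s in α..β, L (g s)‖ ≤
      ‖L‖ * ‖g t - c • ∫ s in α..β, g s‖ := fun t => by
    rw [L.intervalIntegral_comp_comm hg, ← L.map_smul, ← L.map_sub]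
    exact L.le_opNorm _
  calc meanOsc (fun t => L (g t)) α β
      ≤ c * ∫ t in α..β, ‖L‖ * ‖g t - c • ∫ s in α..β, g s‖ :=
        mul_le_mul_of_nonneg_left (intervalIntegral.integral_mono_on hab hosc_L
          (hosc.const_mul _) fun t _ => hpoint t) hc
    _ = ‖L‖ * meanOsc g α β := by
        rw [intervalIntegral.integral_const_mul, mul_left_comm]; rfl

theorem meanOsc_comp_neg (g : ℝ → E) (α β : ℝ) :
    meanOsc (fun t => g (-t)) α β = meanOsc g (-β) (-α) := by
  simp only [meanOsc, intervalIntegral.integral_comp_neg (fun s => g s),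
    intervalIntegral.integral_comp_neg
      (fun t => ‖g t - (β - α)⁻¹ • ∫ s in -β..-α, g s‖), neg_sub_neg]

end MeanOscillation

theorem meanOsc_mul_add_mul_le {A : Type*} [NormedRing A] [NormedAlgebra ℝ A] [CompleteSpace A]
    {a b : A} (ha : ‖a‖ ≤ 1) (hb : ‖b‖ ≤ 1) {g h : ℝ → A} {α β : ℝ} (hab : α ≤ β)
    (hg : IntervalIntegrable g volume α β) (hh : IntervalIntegrable h volume α β) :
    meanOsc (fun t => a * g t + b * h t) α β ≤ meanOsc g α β + meanOsc h α β := by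
  have hmul : ∀ {c : A}, ‖c‖ ≤ 1 → ∀ {k : ℝ → A}, IntervalIntegrable k volume α β →
      meanOsc (fun t => c * k t) α β ≤ meanOsc k α β := fun hc k hk =>
    (meanOsc_comp_le (ContinuousLinearMap.mul ℝ A _) hab hk).trans
      (mul_le_of_le_one_left (meanOsc_nonneg k hab)
        ((ContinuousLinearMap.opNorm_mul_apply_le ℝ A _).trans hc))
  exact (meanOsc_add_le hab (hg.const_mul a) (hh.const_mul b)).trans
    (add_le_add (hmul ha hg) (hmul hb hh))

theorem norm_eq_one_of_sq_eq_neg_one {A : Type*} [NormedDivisionRing A] {x : A}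
    (hx : x ^ 2 = -1) : ‖x‖ = 1 := by
  have hsq : ‖x‖ ^ 2 = 1 := by rw [← norm_pow, hx, norm_neg, norm_one]
  nlinarith [norm_nonneg x]

theorem norm_one_add_div_two_le {A : Type*} [NormedDivisionRing A] [NormedAlgebra ℝ A] {u : A}
    (hu : ‖u‖ ≤ 1) : ‖(1 + u) / 2‖ ≤ 1 := by
  have htwo : ‖(2 : A)‖ = 2 := by
    rw [← map_ofNat (algebraMap ℝ A) 2, norm_algebraMap', Real.norm_ofNat]
  rw [norm_div, htwo, div_le_one two_pos]
  linarith [norm_add_le 1 u, norm_one (α := A)]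

theorem Quaternion.exists_sq_eq_neg_one : ∃ I : Quaternion ℝ, I ^ 2 = -1 := by
  have hi : (⟨0, 1, 0, 0⟩ : Quaternion ℝ) ^ 2 = -1 := by ext <;> simp [pow_two]
  exact ⟨_, hi⟩

theorem IsSlice.apply_eI {f : Quaternion ℝ → Quaternion ℝ} (hf : IsSlice f) {I J : Quaternion ℝ}
    (hI : I ^ 2 = -1) (hJ : J ^ 2 = -1) (t : ℝ) :
    f (eI J t) = (1 - J * I) / 2 * f (eI I t) + (1 + J * I) / 2 * f (eI I (-t)) := by
  have hneg : eI I (-t) = ((Real.cos t : ℝ) : Quaternion ℝ) - Real.sin t • I := by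
    simp [eI, sub_eq_add_neg]
  rw [hneg]
  exact hf _ _ I J hI hJ (Real.cos_sq_add_sin_sq t)

theorem meanOsc_eI_le_of_isSlice {f : Quaternion ℝ → Quaternion ℝ} (hf : IsSlice f)
    {I J : Quaternion ℝ} (hI : I ^ 2 = -1) (hJ : J ^ 2 = -1)
    (hloc : ∀ α β : ℝ, IntervalIntegrable (fun t => f (eI I t)) volume α β)
    {α β : ℝ} (hab : α ≤ β) :
    meanOsc (fun t => f (eI J t)) α β ≤
      meanOsc (fun t => f (eI I t)) α β + meanOsc (fun t => f (eI I t)) (-β) (-α) := by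
  have hJI : ‖J * I‖ = 1 := by
    rw [norm_mul, norm_eq_one_of_sq_eq_neg_one hI, norm_eq_one_of_sq_eq_neg_one hJ, one_mul]
  have ha : ‖(1 - J * I) / 2‖ ≤ 1 := by
    simpa [sub_eq_add_neg] using norm_one_add_div_two_le (u := -(J * I)) (by simp [hJI])
  have hb : ‖(1 + J * I) / 2‖ ≤ 1 := norm_one_add_div_two_le hJI.le
  have hloc_neg : IntervalIntegrable (fun t => f (eI I (-t))) volume α β := by
    simpa using (IntervalIntegrable.iff_comp_neg (by simp)).mp (hloc (-α) (-β))
  simp only [hf.apply_eI hI hJ, ← meanOsc_comp_neg]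
  exact meanOsc_mul_add_mul_le ha hb hab (hloc α β) hloc_neg

theorem two_mul_mem_upperBounds_meanOscSet {f : Quaternion ℝ → Quaternion ℝ} (hf : IsSlice f)
    {I J : Quaternion ℝ} (hI : I ^ 2 = -1) (hJ : J ^ 2 = -1)
    (hloc : ∀ α β : ℝ, IntervalIntegrable (fun t => f (eI I t)) volume α β)
    {M : ℝ} (hM : M ∈ upperBounds (meanOscSet f I)) :
    2 * M ∈ upperBounds (meanOscSet f J) := by
  rintro _ ⟨α, β, hab, hlen, rfl⟩
  change meanOsc (fun t => f (eI J t)) α β ≤ 2 * M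
  have harc : meanOsc (fun t => f (eI I t)) α β ≤ M := hM ⟨α, β, hab, hlen, rfl⟩
  have harc_neg : meanOsc (fun t => f (eI I t)) (-β) (-α) ≤ M :=
    hM ⟨-β, -α, neg_lt_neg hab, by linarith, rfl⟩
  linarith [meanOsc_eI_le_of_isSlice hf hI hJ hloc hab.le]

theorem slice_BMO_characterization_general
    (f : Quaternion ℝ → Quaternion ℝ) (hf : IsSlice f)
    (hloc : ∀ I : Quaternion ℝ, I ^ 2 = -1 → ∀ α β : ℝ,
      IntervalIntegrable (fun t => f (eI I t)) MeasureTheory.volume α β) :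
    ((∃ M : ℝ, ∀ I : Quaternion ℝ, I ^ 2 = -1 → ∀ m ∈ meanOscSet f I, m ≤ M) ↔
      (∀ I : Quaternion ℝ, I ^ 2 = -1 → BddAbove (meanOscSet f I)))
    ∧
    (∀ I : Quaternion ℝ, I ^ 2 = -1 → BddAbove (meanOscSet f I) →
      ∀ J : Quaternion ℝ, J ^ 2 = -1 → BddAbove (meanOscSet f J)) := by
  have transfer : ∀ I, I ^ 2 = -1 → ∀ M ∈ upperBounds (meanOscSet f I),
      ∀ J, J ^ 2 = -1 → 2 * M ∈ upperBounds (meanOscSet f J) :=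
    fun I hI _ hM J hJ => two_mul_mem_upperBounds_meanOscSet hf hI hJ (hloc I hI) hM
  refine ⟨⟨fun ⟨M, hM⟩ I hI => ⟨M, hM I hI⟩, fun hbdd => ?_⟩,
    fun I hI ⟨M, hM⟩ J hJ => ⟨2 * M, transfer I hI M hM J hJ⟩⟩
  obtain ⟨I, hI⟩ := Quaternion.exists_sq_eq_neg_one
  obtain ⟨M, hM⟩ := hbdd I hI
  exact ⟨2 * M, fun J hJ _ hm => transfer I hI M hM J hJ hm⟩

/-- For a slice function `f ∈ L¹ₛ(∂𝔹)`: `f ∈ BMO(∂𝔹)` (i.e. `sup_{I ∈ 𝕊} ‖f‖_{BMO(∂𝔹_I)}`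
is finite) iff `f ∈ BMO(∂𝔹_I)` for every imaginary unit `I`; moreover membership in
`BMO(∂𝔹_I)` on one slice implies membership on every other slice. -/
theorem slice_BMO_characterization (σ : Measure IU) [IsProbabilityMeasure σ]
    (f : Quaternion ℝ → Quaternion ℝ) (hf : IsSlice f)
    (hf1 : Integrable f (sphereMeasure σ))
    (hloc : ∀ I : Quaternion ℝ, I ^ 2 = -1 → ∀ α β : ℝ,
      IntervalIntegrable (fun t => f (eI I t)) MeasureTheory.volume α β) :
    ((∃ M : ℝ, ∀ I : Quaternion ℝ, I ^ 2 = -1 → ∀ m ∈ meanOscSet f I, m ≤ M) ↔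
      (∀ I : Quaternion ℝ, I ^ 2 = -1 → BddAbove (meanOscSet f I)))
    ∧
    (∀ I : Quaternion ℝ, I ^ 2 = -1 → BddAbove (meanOscSet f I) →
      ∀ J : Quaternion ℝ, J ^ 2 = -1 → BddAbove (meanOscSet f J)) :=
  slice_BMO_characterization_general f hf hloc
end
end

section
/- Every uniformly bounded sequence {fₙ} of slice regular functions on the quaternionic unit ball 𝔹 has a subsequence converging uniformly on compact subsets of 𝔹 to a slice regular function. -/
/-!
Restricted to the complex slice `ℂ ⊂ ℍ`, a slice regular function `q ↦ Σ qⁿ aₙ` becomes the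
holomorphic map `z ↦ Σ zⁿ • aₙ` into `ℍ`, viewed as a complex vector space through left
multiplication, so Cauchy's estimates bound every coefficient by `sup_𝔹 ‖f‖`. The coefficient
sequences of a uniformly bounded family thus lie in a product of balls, which is compact, and a
subsequence converges coefficientwise. On `‖q‖ ≤ r < 1` the difference of two such series is at
most `Σ rⁿ ‖aₙ - bₙ‖`, which tends to zero by dominated convergence; every compact subset of `𝔹`
lies in such a ball.
-/

noncomputable section

open Quaternion Filter

/-- A slice regular function on the quaternionic unit ball `𝔹`: a function admitting a power
series expansion `f(q) = Σ_{n ≥ 0} qⁿ aₙ` converging in `𝔹`. -/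
def SliceRegularOnBall (f : Quaternion ℝ → Quaternion ℝ) : Prop :=
  ∃ a : ℕ → Quaternion ℝ, ∀ q : Quaternion ℝ, ‖q‖ < 1 →
    HasSum (fun n : ℕ => q ^ n * a n) (f q)

open Metric Topology

section CauchyEstimate

variable {E : Type*} [NormedAddCommGroup E] [NormedSpace ℂ E] {G : ℂ → E} {a : ℕ → E} {M : ℝ}

theorem hasFPowerSeriesOnBall_of_hasSum_pow_smul
    (hG : ∀ z : ℂ, ‖z‖ < 1 → HasSum (fun n => z ^ n • a n) (G z)) :
    HasFPowerSeriesOnBall G (fun n => ContinuousMultilinearMap.mkPiRing ℂ (Fin n) (a n)) 0 1 where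
  r_le := ENNReal.le_of_forall_nnreal_lt fun r hr =>
    FormalMultilinearSeries.le_radius_of_tendsto _ (l := 0) <| by
      simpa [norm_smul, mul_comm] using
        (hG r (by simpa using hr)).summable.tendsto_atTop_zero.norm
  r_pos := one_pos
  hasSum {z} hz := by
    rw [← ENNReal.coe_one, eball_coe, NNReal.coe_one, mem_ball_zero_iff] at hz
    simpa using hG z hz

variable [CompleteSpace E]

theorem norm_coeff_le_div_pow_of_hasSum_pow_smul
    (hG : ∀ z : ℂ, ‖z‖ < 1 → HasSum (fun n => z ^ n • a n) (G z))
    (hM : ∀ z : ℂ, ‖z‖ < 1 → ‖G z‖ ≤ M) {r : ℝ} (hr₀ : 0 < r) (hr₁ : r < 1) (k : ℕ) :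
    ‖a k‖ ≤ M / r ^ k := by
  have hps := hasFPowerSeriesOnBall_of_hasSum_pow_smul hG
  have hdiff : DiffContOnCl ℂ G (ball 0 r) := by
    refine (hps.differentiableOn.mono ?_).diffContOnCl
    rw [closure_ball 0 hr₀.ne', ← ENNReal.coe_one, eball_coe, NNReal.coe_one]
    exact closedBall_subset_ball hr₁
  have hderiv : iteratedDeriv k G 0 = k.factorial • a k := by
    rw [iteratedDeriv_eq_iteratedFDeriv, ← hps.factorial_smul]
    simp
  have hcauchy := Complex.norm_iteratedDeriv_le_of_forall_mem_sphere_norm_le k hr₀ hdiff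
    fun z hz => hM z (by rw [mem_sphere_zero_iff_norm.1 hz]; exact hr₁)
  rw [hderiv, RCLike.norm_nsmul ℂ, nsmul_eq_mul, mul_div_assoc] at hcauchy
  exact le_of_mul_le_mul_left hcauchy (by positivity)

theorem norm_coeff_le_of_hasSum_pow_smul
    (hG : ∀ z : ℂ, ‖z‖ < 1 → HasSum (fun n => z ^ n • a n) (G z))
    (hM : ∀ z : ℂ, ‖z‖ < 1 → ‖G z‖ ≤ M) (k : ℕ) : ‖a k‖ ≤ M := by
  have hcont : ContinuousAt (fun r : ℝ => M / r ^ k) 1 := by fun_prop (disch := simp)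
  have hlim : Tendsto (fun r : ℝ => M / r ^ k) (𝓝[<] 1) (𝓝 M) := by
    simpa using hcont.tendsto.mono_left nhdsWithin_le_nhds
  refine ge_of_tendsto hlim ?_
  filter_upwards [Ioo_mem_nhdsLT one_pos] with r hr
    using norm_coeff_le_div_pow_of_hasSum_pow_smul hG hM hr.1 hr.2 k

end CauchyEstimate

namespace Quaternion

theorem norm_coeComplex (z : ℂ) : ‖(z : ℍ)‖ = ‖z‖ := by
  rw [← sq_eq_sq₀ (norm_nonneg _) (norm_nonneg _), sq, ← normSq_eq_norm_mul_self,
    Complex.sq_norm, Complex.normSq_apply, normSq_def']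
  simp [sq]

abbrev leftComplexModule : Module ℂ ℍ := Module.compHom ℍ ofComplex.toRingHom

attribute [local instance] leftComplexModule

theorem complex_smul_eq_mul (z : ℂ) (q : ℍ) : z • q = (z : ℍ) * q := rfl

abbrev leftComplexNormedSpace : NormedSpace ℂ ℍ where
  norm_smul_le z q := by rw [complex_smul_eq_mul, norm_mul, norm_coeComplex]

attribute [local instance] leftComplexNormedSpace

theorem norm_coeff_le_of_hasSum_pow_mul {F : ℍ → ℍ} {a : ℕ → ℍ} {M : ℝ}
    (hF : ∀ q : ℍ, ‖q‖ < 1 → HasSum (fun n => q ^ n * a n) (F q))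
    (hM : ∀ q : ℍ, ‖q‖ < 1 → ‖F q‖ ≤ M) (k : ℕ) : ‖a k‖ ≤ M := by
  refine norm_coeff_le_of_hasSum_pow_smul (G := fun z : ℂ => F z) (fun z hz => ?_)
    (fun z hz => hM z (by rwa [norm_coeComplex])) k
  have hterm (n : ℕ) : z ^ n • a n = (z : ℍ) ^ n * a n := by
    rw [complex_smul_eq_mul, ← coe_ofComplex, map_pow]
  simpa only [hterm] using hF z (by rwa [norm_coeComplex])

end Quaternion

theorem summable_pow_mul_of_le {c : ℕ → ℝ} {C r : ℝ} (hc₀ : ∀ k, 0 ≤ c k) (hc : ∀ k, c k ≤ C)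
    (hr₀ : 0 ≤ r) (hr₁ : r < 1) : Summable fun k => r ^ k * c k :=
  ((summable_geometric_of_lt_one hr₀ hr₁).mul_right C).of_nonneg_of_le
    (fun k => mul_nonneg (pow_nonneg hr₀ k) (hc₀ k))
    (fun k => mul_le_mul_of_nonneg_left (hc k) (pow_nonneg hr₀ k))

theorem tendsto_tsum_pow_mul_norm_sub {ι E : Type*} {l : Filter ι} [SeminormedAddCommGroup E]
    {a : ι → ℕ → E} {b : ℕ → E} {M r : ℝ} (hab : ∀ k, Tendsto (a · k) l (𝓝 (b k)))
    (ha : ∀ i k, ‖a i k‖ ≤ M) (hb : ∀ k, ‖b k‖ ≤ M) (hr₀ : 0 ≤ r) (hr₁ : r < 1) :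
    Tendsto (fun i => ∑' k, r ^ k * ‖a i k - b k‖) l (𝓝 0) := by
  have hlim (k : ℕ) : Tendsto (fun i => r ^ k * ‖a i k - b k‖) l (𝓝 0) := by
    simpa using (tendsto_iff_norm_sub_tendsto_zero.1 (hab k)).const_mul (r ^ k)
  have hdom : ∀ i k, ‖r ^ k * ‖a i k - b k‖‖ ≤ r ^ k * (M + M) := fun i k => by
    rw [Real.norm_of_nonneg (by positivity)]
    exact mul_le_mul_of_nonneg_left ((norm_sub_le _ _).trans (add_le_add (ha i k) (hb k)))
      (pow_nonneg hr₀ k)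
  simpa using tendsto_tsum_of_dominated_convergence
    ((summable_geometric_of_lt_one hr₀ hr₁).mul_right (M + M)) hlim (.of_forall hdom)

section BoundedCoefficients

variable {R : Type*} [NormedRing R] [NormOneClass R]

theorem summable_pow_mul_of_norm_le [CompleteSpace R] {b : ℕ → R} {M : ℝ} (hb : ∀ k, ‖b k‖ ≤ M)
    {q : R} (hq : ‖q‖ < 1) : Summable fun k => q ^ k * b k :=
  (summable_pow_mul_of_le (fun k => norm_nonneg (b k)) hb (norm_nonneg q) hq).of_norm_bounded
    fun k => (norm_mul_le _ _).trans
      (mul_le_mul_of_nonneg_right (norm_pow_le q k) (norm_nonneg _))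

theorem norm_sub_le_tsum_of_hasSum_pow_mul {a b : ℕ → R} {x y q : R} {r : ℝ}
    (ha : HasSum (fun k => q ^ k * a k) x) (hb : HasSum (fun k => q ^ k * b k) y) (hq : ‖q‖ ≤ r)
    (hs : Summable fun k => r ^ k * ‖a k - b k‖) : ‖x - y‖ ≤ ∑' k, r ^ k * ‖a k - b k‖ := by
  refine HasSum.norm_le_of_bounded (f := fun k => q ^ k * (a k - b k)) ?_ hs.hasSum fun k => ?_
  · simpa only [mul_sub] using ha.sub hb
  · exact (norm_mul_le _ _).trans (mul_le_mul_of_nonneg_right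
      ((norm_pow_le q k).trans (pow_le_pow_left₀ (norm_nonneg q) hq k)) (norm_nonneg _))

theorem tendstoUniformlyOn_closedBall_of_tendsto_coeff {ι : Type*} {l : Filter ι}
    {F : ι → R → R} {g : R → R} {a : ι → ℕ → R} {b : ℕ → R} {M r : ℝ}
    (hF : ∀ i q, ‖q‖ < 1 → HasSum (fun k => q ^ k * a i k) (F i q))
    (hg : ∀ q, ‖q‖ < 1 → HasSum (fun k => q ^ k * b k) (g q))
    (hab : ∀ k, Tendsto (a · k) l (𝓝 (b k))) (ha : ∀ i k, ‖a i k‖ ≤ M) (hb : ∀ k, ‖b k‖ ≤ M)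
    (hr : r < 1) : TendstoUniformlyOn F g l (closedBall 0 r) := by
  rcases lt_or_ge r 0 with hr₀ | hr₀
  · simpa [closedBall_eq_empty.2 hr₀] using tendstoUniformlyOn_empty
  rw [Metric.tendstoUniformlyOn_iff]
  intro ε hε
  filter_upwards [(tendsto_tsum_pow_mul_norm_sub hab ha hb hr₀ hr).eventually (gt_mem_nhds hε)]
    with i hi q hq
  rw [mem_closedBall_zero_iff] at hq
  have hq₁ := hq.trans_lt hr
  rw [dist_comm, dist_eq_norm]
  refine (norm_sub_le_tsum_of_hasSum_pow_mul (hF i q hq₁) (hg q hq₁) hq ?_).trans_lt hi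
  exact summable_pow_mul_of_le (fun k => norm_nonneg _)
    (fun k => (norm_sub_le _ _).trans (add_le_add (ha i k) (hb k))) hr₀ hr

end BoundedCoefficients

theorem exists_tendsto_subseq_of_norm_le {ι E : Type*} [Countable ι] [NormedAddCommGroup E]
    [ProperSpace E] {a : ℕ → ι → E} {M : ℝ} (ha : ∀ n k, ‖a n k‖ ≤ M) :
    ∃ b : ι → E, (∀ k, ‖b k‖ ≤ M) ∧
      ∃ φ : ℕ → ℕ, StrictMono φ ∧ ∀ k, Tendsto (fun n => a (φ n) k) atTop (𝓝 (b k)) := by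
  have hcompact := isCompact_univ_pi fun _ : ι => isCompact_closedBall (0 : E) M
  obtain ⟨b, hb, φ, hφ, hlim⟩ :=
    hcompact.tendsto_subseq fun n => Set.mem_univ_pi.2 fun k => mem_closedBall_zero_iff.2 (ha n k)
  exact ⟨b, fun k => mem_closedBall_zero_iff.1 (Set.mem_univ_pi.1 hb k), φ, hφ,
    tendsto_pi_nhds.1 hlim⟩

/-- Quaternionic Montel theorem: every uniformly bounded sequence of slice regular functions
on `𝔹` has a subsequence converging uniformly on compact subsets of `𝔹` to a slice regular
function. -/
theorem quaternionic_montel (f : ℕ → Quaternion ℝ → Quaternion ℝ)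
    (hreg : ∀ n : ℕ, SliceRegularOnBall (f n))
    (hbdd : ∃ M : ℝ, ∀ n : ℕ, ∀ q : Quaternion ℝ, ‖q‖ < 1 → ‖f n q‖ ≤ M) :
    ∃ (g : Quaternion ℝ → Quaternion ℝ) (φ : ℕ → ℕ), SliceRegularOnBall g ∧
      StrictMono φ ∧
      ∀ K : Set (Quaternion ℝ), K ⊆ Metric.ball (0 : Quaternion ℝ) 1 → IsCompact K →
        TendstoUniformlyOn (fun n => f (φ n)) g atTop K := by
  choose a ha using hreg
  obtain ⟨M, hM⟩ := hbdd
  have ha_le (n k : ℕ) : ‖a n k‖ ≤ M := Quaternion.norm_coeff_le_of_hasSum_pow_mul (ha n) (hM n) k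
  obtain ⟨b, hb, φ, hφ, hab⟩ := exists_tendsto_subseq_of_norm_le ha_le
  have hg (q : ℍ) (hq : ‖q‖ < 1) : HasSum (fun k => q ^ k * b k) (∑' k, q ^ k * b k) :=
    (summable_pow_mul_of_norm_le hb hq).hasSum
  refine ⟨fun q => ∑' k, q ^ k * b k, φ, ⟨b, hg⟩, hφ, fun K hK hKc => ?_⟩
  obtain ⟨r, hr, hKr⟩ := exists_lt_subset_ball hKc.isClosed hK
  exact (tendstoUniformlyOn_closedBall_of_tendsto_coeff (fun n => ha (φ n)) hg hab
    (fun n => ha_le (φ n)) hb hr).mono (hKr.trans ball_subset_closedBall)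
end
end
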